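/- arXiv:gr-qc/0406088 — 3 statements merged into one kernel-verified Lean document; each statement's English description precedes it below -/
import Mathlib

section
/- Fix a symmetric invertible 4×4 matrix g (with inverse g^{μν}) and a constant k > 0, and set π^{μν} = (√|det g|/(2k)) g^{μν}. Define the linear map from symmetric-in-(μν) tensors f^λ_{μν} (symmetric in the lower indices) to tensors J by J_λ^{μν} := 2 f^{(μ}_{ρλ} π^{ν)ρ} - f^ρ_{ρλ} π^{μν} - δ^{(μ}_λ f^{ν)}_{ρσ} π^{ρσ}. Then the map f ↦ J is inverted by f^λ_{μν} = (k/√|det g|) [ 2 J_{(μ}^{ρλ} g_{ν)ρ} - J_ρ^{ρλ} g_{μν} - J_ρ^{στ} g^{ρλ}(g_{μσ} g_{ντ} - ½ g_{στ} g_{μν}) + (2/3) δ^λ_{(μ} J_ρ^{ρσ} g_{ν)σ} - δ^λ_{(μ} J_{ν)}^{ρσ} g_{ρσ} ], i.e. substituting J(f) into this formula returns f. -/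
/-!
Put `π = c • h` with `h = g⁻¹` and `c = √|det g| / (2k)`; both the map `f ↦ J` and the
inversion formula are linear, so it suffices to show that the formula (without its prefactor)
sends the current built from `h` to `2 f`. Each term of the formula is a contraction of that
current with `g` and `h`, and `g h = 1` evaluates it in terms of `f`, the lowered-raised
tensor `g_{bρ} f^ρ_{σa} h^{cσ}`, and the two traces `f^ρ_{ρa}` and `f^a_{ρσ} h^{ρσ}`.
Summing up, everything except `2 f` cancels. In dimension `n` the trace `J_ρ^{ρa}` carries the
factor `-(n-1)/2`, which is where the `2/3` comes from, and the terms in `f^ρ_{ρa}` cancel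
only for `n = 4`.
-/

open Matrix
open scoped BigOperators

def kd (a b : Fin 4) : ℝ := if a = b then 1 else 0

namespace Nonmetricity

noncomputable section

variable {ι : Type*} [Fintype ι] [DecidableEq ι]

def firstTrace (f : ι → ι → ι → ℝ) (a : ι) : ℝ := ∑ ρ, f ρ ρ a

def metricTrace (h : Matrix ι ι ℝ) (f : ι → ι → ι → ℝ) (a : ι) : ℝ :=
  ∑ ρ, ∑ σ, f a ρ σ * h ρ σ

/-- `current π f l μ ν` is `J_l^{μν}` for `f l μ ν = f^l_{μν}`; the Kronecker delta is
`(1 : Matrix ι ι ℝ)`. -/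
def current (π : Matrix ι ι ℝ) (f : ι → ι → ι → ℝ) (l μ ν : ι) : ℝ :=
  (∑ ρ, f μ ρ l * π ν ρ) + (∑ ρ, f ν ρ l * π μ ρ) - firstTrace f l * π μ ν
    - (1 / 2) * ((1 : Matrix ι ι ℝ) μ l * metricTrace π f ν
      + (1 : Matrix ι ι ℝ) ν l * metricTrace π f μ)

def currentInverse (g h : Matrix ι ι ℝ) (J : ι → ι → ι → ℝ) (l μ ν : ι) : ℝ :=
  ((∑ ρ, J μ ρ l * g ν ρ) + (∑ ρ, J ν ρ l * g μ ρ))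
    - (∑ ρ, J ρ ρ l) * g μ ν
    - (∑ ρ, ∑ σ, ∑ τ, J ρ σ τ * h ρ l * (g μ σ * g ν τ - (1 / 2) * g σ τ * g μ ν))
    + (2 / 3) * (1 / 2) * ((1 : Matrix ι ι ℝ) l μ * (∑ ρ, ∑ σ, J ρ ρ σ * g ν σ)
      + (1 : Matrix ι ι ℝ) l ν * (∑ ρ, ∑ σ, J ρ ρ σ * g μ σ))
    - (1 / 2) * ((1 : Matrix ι ι ℝ) l μ * (∑ ρ, ∑ σ, J ν ρ σ * g ρ σ)
      + (1 : Matrix ι ι ℝ) l ν * (∑ ρ, ∑ σ, J μ ρ σ * g ρ σ))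

variable {g h : Matrix ι ι ℝ} {f : ι → ι → ι → ℝ}

theorem sum_mul_apply_of_mul_eq_one (hgh : g * h = 1) (a b : ι) :
    ∑ ρ, h ρ a * g b ρ = (1 : Matrix ι ι ℝ) b a := by
  simp_rw [mul_comm (h _ _), ← Matrix.mul_apply, hgh]

theorem sum_sum_mul_mul_of_mul_eq_one (hgh : g * h = 1) (x : ι → ℝ) (b : ι) :
    ∑ ρ, (∑ σ, x σ * h ρ σ) * g b ρ = x b := by
  simp_rw [Finset.sum_mul]
  rw [Finset.sum_comm]
  simp_rw [mul_assoc, ← Finset.mul_sum, sum_mul_apply_of_mul_eq_one hgh, Matrix.one_apply,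
    mul_ite, mul_one, mul_zero, Finset.sum_ite_eq, Finset.mem_univ, if_true]

theorem sum_current_diag (hh : h.IsSymm) (hf : ∀ l μ ν, f l μ ν = f l ν μ) (a : ι) :
    ∑ ρ, current h f ρ ρ a = -((Fintype.card ι - 1) / 2) * metricTrace h f a := by
  have hfirst : ∑ ρ, ∑ σ, f ρ σ ρ * h a σ = ∑ ρ, firstTrace f ρ * h ρ a := by
    simp_rw [firstTrace, Finset.sum_mul]
    rw [Finset.sum_comm]
    exact Finset.sum_congr rfl fun σ _ => Finset.sum_congr rfl fun ρ _ => by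
      rw [hf, hh.apply]
  have hsecond : ∑ ρ, ∑ σ, f a σ ρ * h ρ σ = metricTrace h f a := by
    rw [metricTrace, Finset.sum_comm]
    exact Finset.sum_congr rfl fun σ _ => Finset.sum_congr rfl fun ρ _ => by
      rw [hf, hh.apply]
  simp only [current, Finset.sum_add_distrib, Finset.sum_sub_distrib, ← Finset.mul_sum,
    hfirst, hsecond, Matrix.one_apply, if_true, Finset.sum_const, Finset.card_univ,
    nsmul_eq_mul, ite_mul, one_mul, zero_mul, Finset.sum_ite_eq, Finset.mem_univ]
  ring

theorem sum_current_mul (hgh : g * h = 1) (a b c : ι) :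
    ∑ ρ, current h f a ρ c * g b ρ
      = ∑ ρ, (∑ σ, f ρ σ a * h c σ) * g b ρ + f c b a
        - firstTrace f a * (1 : Matrix ι ι ℝ) b c
        - (1 / 2) * (metricTrace h f c * g b a
          + (1 : Matrix ι ι ℝ) c a * ∑ σ, metricTrace h f σ * g b σ) := by
  simp only [current, sub_mul, add_mul, Finset.sum_add_distrib, Finset.sum_sub_distrib,
    mul_assoc, ← Finset.mul_sum, sum_sum_mul_mul_of_mul_eq_one hgh (fun σ => f c σ a) b,
    sum_mul_apply_of_mul_eq_one hgh]
  simp [Matrix.one_apply]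

theorem sum_sum_current_mul (hg : g.IsSymm) (hh : h.IsSymm) (hgh : g * h = 1) (a : ι) :
    ∑ ρ, ∑ σ, current h f a ρ σ * g ρ σ
      = (2 - Fintype.card ι) * firstTrace f a - ∑ σ, metricTrace h f σ * g a σ := by
  have hfirst : ∑ ρ, ∑ σ, (∑ τ, f ρ τ a * h σ τ) * g ρ σ = firstTrace f a :=
    Finset.sum_congr rfl fun ρ _ => sum_sum_mul_mul_of_mul_eq_one hgh (fun τ => f ρ τ a) ρ
  have hsecond : ∑ ρ, ∑ σ, (∑ τ, f σ τ a * h ρ τ) * g ρ σ = firstTrace f a := by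
    rw [Finset.sum_comm]
    refine Finset.sum_congr rfl fun σ _ => ?_
    simp_rw [hg.apply σ]
    exact sum_sum_mul_mul_of_mul_eq_one hgh (fun τ => f σ τ a) σ
  have htrace : ∑ ρ, ∑ σ, h ρ σ * g ρ σ = Fintype.card ι := by
    have hdiag (ρ : ι) : ∑ σ, h ρ σ * g ρ σ = 1 := by
      simp_rw [← hh.apply ρ, sum_mul_apply_of_mul_eq_one hgh, Matrix.one_apply_eq]
    simp [hdiag]
  simp only [current, sub_mul, add_mul, Finset.sum_add_distrib, Finset.sum_sub_distrib,
    mul_assoc, ← Finset.mul_sum, hfirst, hsecond, htrace]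
  simp only [Matrix.one_apply, ite_mul, one_mul, zero_mul, Finset.sum_ite_eq',
    Finset.mem_univ, if_true, hg.apply _ a]
  ring

theorem sum_sum_current_mul_mul (hg : g.IsSymm) (hgh : g * h = 1) (ρ μ ν : ι) :
    ∑ σ, ∑ τ, current h f ρ σ τ * g μ σ * g ν τ
      = ∑ σ, f σ ν ρ * g μ σ + ∑ σ, f σ μ ρ * g ν σ - firstTrace f ρ * g μ ν
        - (1 / 2) * (g μ ρ * ∑ σ, metricTrace h f σ * g ν σ
          + g ν ρ * ∑ σ, metricTrace h f σ * g μ σ) := by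
  have hfirst : ∑ σ, ∑ τ, (∑ α, f σ α ρ * h τ α) * g μ σ * g ν τ
      = ∑ σ, f σ ν ρ * g μ σ :=
    Finset.sum_congr rfl fun σ _ => by
      simp_rw [mul_right_comm _ (g μ σ), ← Finset.sum_mul, sum_sum_mul_mul_of_mul_eq_one hgh]
  have hsecond : ∑ σ, ∑ τ, (∑ α, f τ α ρ * h σ α) * g μ σ * g ν τ
      = ∑ σ, f σ μ ρ * g ν σ := by
    rw [Finset.sum_comm]
    exact Finset.sum_congr rfl fun σ _ => by
      simp_rw [← Finset.sum_mul, sum_sum_mul_mul_of_mul_eq_one hgh]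
  have hthird : ∑ σ, ∑ τ, firstTrace f ρ * h σ τ * g μ σ * g ν τ
      = firstTrace f ρ * g μ ν := by
    simp_rw [mul_assoc, ← Finset.mul_sum, ← mul_assoc]
    rw [Finset.sum_comm]
    simp_rw [← Finset.sum_mul, sum_mul_apply_of_mul_eq_one hgh]
    simp [Matrix.one_apply, hg.apply]
  have hfourth : ∑ σ, ∑ τ, (1 / 2) * ((1 : Matrix ι ι ℝ) σ ρ * metricTrace h f τ
        + (1 : Matrix ι ι ℝ) τ ρ * metricTrace h f σ) * g μ σ * g ν τ
      = (1 / 2) * (g μ ρ * ∑ σ, metricTrace h f σ * g ν σ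
        + g ν ρ * ∑ σ, metricTrace h f σ * g μ σ) := by
    simp only [mul_add, add_mul, Finset.sum_add_distrib, Matrix.one_apply, mul_ite, ite_mul,
      one_mul, mul_zero, zero_mul, Finset.sum_ite_irrel, Finset.sum_const_zero,
      Finset.sum_ite_eq', Finset.mem_univ, if_true, Finset.mul_sum]
    congr 1 <;> exact Finset.sum_congr rfl fun _ _ => by ring
  simp only [current, sub_mul, add_mul, Finset.sum_add_distrib, Finset.sum_sub_distrib,
    hfirst, hsecond, hthird, hfourth]

theorem sum_mul_sum_sum_current_mul_mul (hg : g.IsSymm) (hh : h.IsSymm) (hgh : g * h = 1)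
    (hf : ∀ l μ ν, f l μ ν = f l ν μ) (l μ ν : ι) :
    ∑ ρ, h ρ l * ∑ σ, ∑ τ, current h f ρ σ τ * g μ σ * g ν τ
      = ∑ ρ, (∑ σ, f ρ σ ν * h l σ) * g μ ρ + ∑ ρ, (∑ σ, f ρ σ μ * h l σ) * g ν ρ
        - (∑ ρ, firstTrace f ρ * h ρ l) * g μ ν
        - (1 / 2) * ((1 : Matrix ι ι ℝ) μ l * ∑ σ, metricTrace h f σ * g ν σ
          + (1 : Matrix ι ι ℝ) ν l * ∑ σ, metricTrace h f σ * g μ σ) := by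
  have hraise (a b : ι) :
      ∑ ρ, h ρ l * ∑ σ, f σ a ρ * g b σ = ∑ ρ, (∑ σ, f ρ σ a * h l σ) * g b ρ := by
    simp_rw [Finset.mul_sum, Finset.sum_mul]
    rw [Finset.sum_comm]
    exact Finset.sum_congr rfl fun σ _ => Finset.sum_congr rfl fun ρ _ => by
      rw [hf, hh.apply]; ring
  have htrace : ∑ ρ, h ρ l * (firstTrace f ρ * g μ ν)
      = (∑ ρ, firstTrace f ρ * h ρ l) * g μ ν := by
    rw [Finset.sum_mul]
    exact Finset.sum_congr rfl fun ρ _ => by ring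
  have hdelta (b : ι) (x : ℝ) :
      ∑ ρ, h ρ l * ((1 / 2) * (g b ρ * x)) = (1 / 2) * ((1 : Matrix ι ι ℝ) b l * x) := by
    rw [← sum_mul_apply_of_mul_eq_one hgh l b, Finset.sum_mul, Finset.mul_sum]
    exact Finset.sum_congr rfl fun ρ _ => by ring
  simp only [sum_sum_current_mul_mul hg hgh, mul_sub, mul_add, Finset.sum_add_distrib,
    Finset.sum_sub_distrib, hraise, htrace, hdelta]

theorem sum_mul_sum_sum_current_mul (hg : g.IsSymm) (hh : h.IsSymm) (hgh : g * h = 1)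
    (l : ι) :
    ∑ ρ, h ρ l * ∑ σ, ∑ τ, current h f ρ σ τ * g σ τ
      = (2 - Fintype.card ι) * ∑ ρ, firstTrace f ρ * h ρ l - metricTrace h f l := by
  have hraise : ∑ ρ, h ρ l * ∑ σ, metricTrace h f σ * g ρ σ = metricTrace h f l := by
    simp_rw [hh.apply, mul_comm (h _ _)]
    exact sum_sum_mul_mul_of_mul_eq_one (mul_eq_one_comm.mp hgh) _ l
  simp only [sum_sum_current_mul hg hh hgh, mul_sub, Finset.sum_sub_distrib, hraise]
  rw [Finset.mul_sum]
  congr 1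
  exact Finset.sum_congr rfl fun ρ _ => by ring

theorem currentInverse_current (hcard : Fintype.card ι = 4) (hg : g.IsSymm) (hh : h.IsSymm)
    (hgh : g * h = 1) (hf : ∀ l μ ν, f l μ ν = f l ν μ) (l μ ν : ι) :
    currentInverse g h (current h f) l μ ν = 2 * f l μ ν := by
  have hsplit : ∑ ρ, ∑ σ, ∑ τ, current h f ρ σ τ * h ρ l
        * (g μ σ * g ν τ - (1 / 2) * g σ τ * g μ ν)
      = ∑ ρ, h ρ l * ∑ σ, ∑ τ, current h f ρ σ τ * g μ σ * g ν τ
        - (1 / 2) * g μ ν * ∑ ρ, h ρ l * ∑ σ, ∑ τ, current h f ρ σ τ * g σ τ := by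
    simp only [Finset.mul_sum, ← Finset.sum_sub_distrib]
    exact Finset.sum_congr rfl fun ρ _ => Finset.sum_congr rfl fun σ _ =>
      Finset.sum_congr rfl fun τ _ => by ring
  have hdiag (b : ι) : ∑ ρ, ∑ σ, current h f ρ ρ σ * g b σ
      = -((Fintype.card ι - 1) / 2) * ∑ σ, metricTrace h f σ * g b σ := by
    rw [Finset.sum_comm]
    simp_rw [← Finset.sum_mul, sum_current_diag hh hf, Finset.mul_sum, mul_assoc]
  have hδ (a b : ι) : (1 : Matrix ι ι ℝ) a b = (1 : Matrix ι ι ℝ) b a :=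
    Matrix.isSymm_one.apply b a
  rw [currentInverse, hsplit, sum_mul_sum_sum_current_mul_mul hg hh hgh hf,
    sum_mul_sum_sum_current_mul hg hh hgh, sum_current_mul hgh, sum_current_mul hgh,
    sum_current_diag hh hf, hdiag, hdiag, sum_sum_current_mul hg hh hgh,
    sum_sum_current_mul hg hh hgh, hcard, hf l ν μ, hg.apply μ ν, hδ ν l, hδ μ l]
  push_cast
  ring

theorem current_smul (c : ℝ) (π : Matrix ι ι ℝ) (l μ ν : ι) :
    current (c • π) f l μ ν = c * current π f l μ ν := by
  simp only [current, metricTrace, Matrix.smul_apply, smul_eq_mul, mul_left_comm _ c,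
    ← Finset.mul_sum]
  ring

theorem currentInverse_smul (c : ℝ) (J : ι → ι → ι → ℝ) (l μ ν : ι) :
    currentInverse g h (c • J) l μ ν = c * currentInverse g h J l μ ν := by
  simp only [currentInverse, Pi.smul_apply, smul_eq_mul, mul_assoc, ← Finset.mul_sum]
  ring

end

end Nonmetricity

/-- Inversion formula (eq:f(J,g)) for the map `f ↦ J` given by
`J_λ^{μν} = 2 f^{(μ}_{ρλ} π^{ν)ρ} - f^ρ_{ρλ} π^{μν} - δ^{(μ}_λ f^{ν)}_{ρσ} π^{ρσ}`
with `π^{μν} = (√|det g|/(2k)) g^{μν}`. -/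
theorem nonmetricity_inversion (k : ℝ) (hk : 0 < k)
    (g : Matrix (Fin 4) (Fin 4) ℝ) (hsym : g.IsSymm) (hdet : IsUnit g.det)
    (π : Fin 4 → Fin 4 → ℝ)
    (hπ : ∀ μ ν, π μ ν = Real.sqrt |g.det| / (2 * k) * g⁻¹ μ ν)
    (f : Fin 4 → Fin 4 → Fin 4 → ℝ) (hf : ∀ l μ ν, f l μ ν = f l ν μ)
    (J : Fin 4 → Fin 4 → Fin 4 → ℝ)
    (hJ : ∀ l μ ν, J l μ ν
      = ((∑ ρ, f μ ρ l * π ν ρ) + (∑ ρ, f ν ρ l * π μ ρ))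
        - (∑ ρ, f ρ ρ l) * π μ ν
        - (1 / 2) * (kd μ l * (∑ ρ, ∑ σ, f ν ρ σ * π ρ σ)
                      + kd ν l * (∑ ρ, ∑ σ, f μ ρ σ * π ρ σ))) :
    ∀ l μ ν, f l μ ν
      = (k / Real.sqrt |g.det|) *
          (((∑ ρ, J μ ρ l * g ν ρ) + (∑ ρ, J ν ρ l * g μ ρ))
            - (∑ ρ, J ρ ρ l) * g μ ν
            - (∑ ρ, ∑ σ, ∑ τ, J ρ σ τ * g⁻¹ ρ l *
                (g μ σ * g ν τ - (1 / 2) * g σ τ * g μ ν))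
            + (2 / 3) * (1 / 2) * (kd l μ * (∑ ρ, ∑ σ, J ρ ρ σ * g ν σ)
                                    + kd l ν * (∑ ρ, ∑ σ, J ρ ρ σ * g μ σ))
            - (1 / 2) * (kd l μ * (∑ ρ, ∑ σ, J ν ρ σ * g ρ σ)
                          + kd l ν * (∑ ρ, ∑ σ, J μ ρ σ * g ρ σ))) := by
  have hsqrt : Real.sqrt |g.det| ≠ 0 := by
    have := hdet.ne_zero
    positivity
  have hinv : g⁻¹.IsSymm := by
    rw [Matrix.IsSymm, Matrix.transpose_nonsing_inv, hsym]
  have hJ' : J = (Real.sqrt |g.det| / (2 * k)) • Nonmetricity.current g⁻¹ f := by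
    have hπ' : π = (Real.sqrt |g.det| / (2 * k)) • g⁻¹ := funext₂ hπ
    funext l μ ν
    rw [Pi.smul_apply, Pi.smul_apply, Pi.smul_apply, smul_eq_mul,
      ← Nonmetricity.current_smul, ← hπ']
    exact hJ l μ ν
  intro l μ ν
  change f l μ ν = k / Real.sqrt |g.det| * Nonmetricity.currentInverse g g⁻¹ J l μ ν
  rw [hJ', Nonmetricity.currentInverse_smul, Nonmetricity.currentInverse_current
    (Fintype.card_fin 4) hsym hinv (Matrix.mul_nonsing_inv g hdet) hf]
  field_simp
end

section
/- Let π^{μν} be a symmetric array and f^λ_{μν} an array symmetric in (μ,ν) over Fin 4, and define J_λ^{μν} := 2 f^{(μ}_{ρλ} π^{ν)ρ} - f^ρ_{ρλ} π^{μν} - δ^{(μ}_λ f^{ν)}_{ρσ} π^{ρσ}. Then the contraction identity -J_λ^{μν} d f^λ_{μν} = π^{μν} d(f^ρ_{σρ} f^σ_{μν} - f^ρ_{σμ} f^σ_{ρν}) holds in the following algebraic sense: for any array h^λ_{μν} symmetric in (μ,ν) (playing the role of the differential df), -J_λ^{μν}(f) · h^λ_{μν} = π^{μν} · [h^ρ_{σρ}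 f^σ_{μν} + f^ρ_{σρ} h^σ_{μν} - h^ρ_{σμ} f^σ_{ρν} - f^ρ_{σμ} h^σ_{ρν}]. -/
open scoped BigOperators

/-- The key computation in the proof of Theorem 1 of Kijowski–Werpachowski:
with `J_λ^{μν} = 2 f^{(μ}_{ρλ} π^{ν)ρ} - f^ρ_{ρλ} π^{μν} - δ^{(μ}_λ f^{ν)}_{ρσ} π^{ρσ}`,
for any symmetric-in-lower-pair direction `h` (the 'differential' of `f`),
`-J_λ^{μν} h^λ_{μν} = π^{μν} d(f^ρ_{σρ} f^σ_{μν} - f^ρ_{σμ} f^σ_{ρν})[h]`. -/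
theorem J_contraction_identity (π : Fin 4 → Fin 4 → ℝ)
    (hπ : ∀ μ ν, π μ ν = π ν μ)
    (f : Fin 4 → Fin 4 → Fin 4 → ℝ) (hf : ∀ l μ ν, f l μ ν = f l ν μ)
    (h : Fin 4 → Fin 4 → Fin 4 → ℝ) (hh : ∀ l μ ν, h l μ ν = h l ν μ)
    (J : Fin 4 → Fin 4 → Fin 4 → ℝ)
    (hJ : ∀ l μ ν, J l μ ν
      = ((∑ ρ, f μ ρ l * π ν ρ) + (∑ ρ, f ν ρ l * π μ ρ))
        - (∑ ρ, f ρ ρ l) * π μ ν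
        - (1 / 2) * (kd μ l * (∑ ρ, ∑ σ, f ν ρ σ * π ρ σ)
                      + kd ν l * (∑ ρ, ∑ σ, f μ ρ σ * π ρ σ))) :
    -(∑ l, ∑ μ, ∑ ν, J l μ ν * h l μ ν)
      = ∑ μ, ∑ ν, π μ ν *
          ((∑ ρ, ∑ σ, h ρ σ ρ * f σ μ ν) + (∑ ρ, ∑ σ, f ρ σ ρ * h σ μ ν)
            - (∑ ρ, ∑ σ, h ρ σ μ * f σ ρ ν) - (∑ ρ, ∑ σ, f ρ σ μ * h σ ρ ν)) := by
  have e1 : (∑ l, ∑ μ, ∑ ν, (∑ ρ, f μ ρ l * π ν ρ) * h l μ ν)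
      = ∑ μ, ∑ ν, π μ ν * (∑ ρ, ∑ σ, f ρ σ μ * h σ ρ ν) := by
    simp only [Fin.sum_univ_four]
    simp only [hπ 1 0, hπ 2 0, hπ 2 1, hπ 3 0, hπ 3 1, hπ 3 2,
      hf _ 1 0, hf _ 2 0, hf _ 2 1, hf _ 3 0, hf _ 3 1, hf _ 3 2,
      hh _ 1 0, hh _ 2 0, hh _ 2 1, hh _ 3 0, hh _ 3 1, hh _ 3 2]
    ring
  have e2 : (∑ l, ∑ μ, ∑ ν, (∑ ρ, f ν ρ l * π μ ρ) * h l μ ν)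
      = ∑ μ, ∑ ν, π μ ν * (∑ ρ, ∑ σ, h ρ σ μ * f σ ρ ν) := by
    simp only [Fin.sum_univ_four]
    simp only [hπ 1 0, hπ 2 0, hπ 2 1, hπ 3 0, hπ 3 1, hπ 3 2,
      hf _ 1 0, hf _ 2 0, hf _ 2 1, hf _ 3 0, hf _ 3 1, hf _ 3 2,
      hh _ 1 0, hh _ 2 0, hh _ 2 1, hh _ 3 0, hh _ 3 1, hh _ 3 2]
    ring
  have e3 : (∑ l, ∑ μ, ∑ ν, ((∑ ρ, f ρ ρ l) * π μ ν) * h l μ ν)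
      = ∑ μ, ∑ ν, π μ ν * (∑ ρ, ∑ σ, f ρ σ ρ * h σ μ ν) := by
    simp only [Fin.sum_univ_four]
    simp only [hf _ 1 0, hf _ 2 0, hf _ 2 1, hf _ 3 0, hf _ 3 1, hf _ 3 2]
    ring
  have e4 : (∑ l, ∑ μ, ∑ ν,
        ((1 / 2 : ℝ) * (kd μ l * (∑ ρ, ∑ σ, f ν ρ σ * π ρ σ)
          + kd ν l * (∑ ρ, ∑ σ, f μ ρ σ * π ρ σ))) * h l μ ν)
      = ∑ μ, ∑ ν, π μ ν * (∑ ρ, ∑ σ, h ρ σ ρ * f σ μ ν) := by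
    simp only [Fin.sum_univ_four,
      (show kd 0 0 = (1:ℝ) from if_pos rfl),
      (show kd 0 1 = (0:ℝ) from if_neg (by decide)),
      (show kd 0 2 = (0:ℝ) from if_neg (by decide)),
      (show kd 0 3 = (0:ℝ) from if_neg (by decide)),
      (show kd 1 0 = (0:ℝ) from if_neg (by decide)),
      (show kd 1 1 = (1:ℝ) from if_pos rfl),
      (show kd 1 2 = (0:ℝ) from if_neg (by decide)),
      (show kd 1 3 = (0:ℝ) from if_neg (by decide)),
      (show kd 2 0 = (0:ℝ) from if_neg (by decide)),
      (show kd 2 1 = (0:ℝ) from if_neg (by decide)),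
      (show kd 2 2 = (1:ℝ) from if_pos rfl),
      (show kd 2 3 = (0:ℝ) from if_neg (by decide)),
      (show kd 3 0 = (0:ℝ) from if_neg (by decide)),
      (show kd 3 1 = (0:ℝ) from if_neg (by decide)),
      (show kd 3 2 = (0:ℝ) from if_neg (by decide)),
      (show kd 3 3 = (1:ℝ) from if_pos rfl),
      mul_zero, zero_mul, mul_one, one_mul, add_zero, zero_add]
    simp only [hπ 1 0, hπ 2 0, hπ 2 1, hπ 3 0, hπ 3 1, hπ 3 2,
      hf _ 1 0, hf _ 2 0, hf _ 2 1, hf _ 3 0, hf _ 3 1, hf _ 3 2,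
      hh _ 1 0, hh _ 2 0, hh _ 2 1, hh _ 3 0, hh _ 3 1, hh _ 3 2]
    ring
  have step : ∀ l μ ν, J l μ ν * h l μ ν
      = (∑ ρ, f μ ρ l * π ν ρ) * h l μ ν + (∑ ρ, f ν ρ l * π μ ρ) * h l μ ν
        - ((∑ ρ, f ρ ρ l) * π μ ν) * h l μ ν
        - ((1 / 2 : ℝ) * (kd μ l * (∑ ρ, ∑ σ, f ν ρ σ * π ρ σ)
            + kd ν l * (∑ ρ, ∑ σ, f μ ρ σ * π ρ σ))) * h l μ ν := by
    intro l μ ν; rw [hJ]; ring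
  have rstep : ∀ μ ν, π μ ν *
        ((∑ ρ, ∑ σ, h ρ σ ρ * f σ μ ν) + (∑ ρ, ∑ σ, f ρ σ ρ * h σ μ ν)
          - (∑ ρ, ∑ σ, h ρ σ μ * f σ ρ ν) - (∑ ρ, ∑ σ, f ρ σ μ * h σ ρ ν))
      = π μ ν * (∑ ρ, ∑ σ, h ρ σ ρ * f σ μ ν) + π μ ν * (∑ ρ, ∑ σ, f ρ σ ρ * h σ μ ν)
        - π μ ν * (∑ ρ, ∑ σ, h ρ σ μ * f σ ρ ν) - π μ ν * (∑ ρ, ∑ σ, f ρ σ μ * h σ ρ ν) := by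
    intro μ ν; ring
  simp only [step, rstep, Finset.sum_sub_distrib, Finset.sum_add_distrib]
  rw [e1, e2, e3, e4] at *
  ring
end

section
/- Let π^{μν} be symmetric with π = c g^{μν} for an invertible symmetric 4×4 matrix g and scalar c ≠ 0, and let f^λ_{μν} be symmetric in (μ,ν). Define J from f by J_λ^{μν} := 2 f^{(μ}_{ρλ} π^{ν)ρ} - f^ρ_{ρλ} π^{μν} - δ^{(μ}_λ f^{ν)}_{ρσ} π^{ρσ}, and define f' from J by the formula f'^λ_{μν} := (1/(2c)) [ 2 J_{(μ}^{ρλ} g_{ν)ρ} - J_ρ^{ρλ} g_{μν} - J_ρ^{στ} g^{ρλ}(g_{μσ} g_{ντ} - ½ g_{στ} g_{μν}) + (2/3) δ^λ_{(μ} J_ρ^{ρσ} g_{ν)σ} - δ^λ_{(μ} J_{ν)}^{ρσ} g_{ρσ} ] (indices of J raised with g^{μν}). Then f' = f, i.e. the maps f ↦ J and J ↦ f' are mutually inverse on the space of (1,2)-arrays symmetric in the lower pair. -/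
open Matrix
open scoped BigOperators

/-- The maps `f ↦ J` (eq:lmata-metric) and `J ↦ f'` (eq:f(J,g)) are mutually
inverse on (1,2)-arrays symmetric in the lower pair, for `π^{μν} = c g^{μν}`. -/
theorem f_J_mutually_inverse (g : Matrix (Fin 4) (Fin 4) ℝ)
    (hsym : g.IsSymm) (hdet : IsUnit g.det) (c : ℝ) (hc : c ≠ 0)
    (π : Fin 4 → Fin 4 → ℝ) (hπ : ∀ μ ν, π μ ν = c * g⁻¹ μ ν)
    (f : Fin 4 → Fin 4 → Fin 4 → ℝ) (hf : ∀ l μ ν, f l μ ν = f l ν μ)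
    (J : Fin 4 → Fin 4 → Fin 4 → ℝ)
    (hJ : ∀ l μ ν, J l μ ν
      = ((∑ ρ, f μ ρ l * π ν ρ) + (∑ ρ, f ν ρ l * π μ ρ))
        - (∑ ρ, f ρ ρ l) * π μ ν
        - (1 / 2) * (kd μ l * (∑ ρ, ∑ σ, f ν ρ σ * π ρ σ)
                      + kd ν l * (∑ ρ, ∑ σ, f μ ρ σ * π ρ σ)))
    (f' : Fin 4 → Fin 4 → Fin 4 → ℝ)
    (hf' : ∀ l μ ν, f' l μ ν
      = (1 / (2 * c)) *
          (((∑ ρ, J μ ρ l * g ν ρ) + (∑ ρ, J ν ρ l * g μ ρ))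
            - (∑ ρ, J ρ ρ l) * g μ ν
            - (∑ ρ, ∑ σ, ∑ τ, J ρ σ τ * g⁻¹ ρ l *
                (g μ σ * g ν τ - (1 / 2) * g σ τ * g μ ν))
            + (2 / 3) * (1 / 2) * (kd l μ * (∑ ρ, ∑ σ, J ρ ρ σ * g ν σ)
                                    + kd l ν * (∑ ρ, ∑ σ, J ρ ρ σ * g μ σ))
            - (1 / 2) * (kd l μ * (∑ ρ, ∑ σ, J ν ρ σ * g ρ σ)
                          + kd l ν * (∑ ρ, ∑ σ, J μ ρ σ * g ρ σ)))) :
    ∀ l μ ν, f' l μ ν = f l μ ν := by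
  intro l μ ν
  -- basic symmetry and inverse facts
  have hgs : ∀ a b, g a b = g b a := fun a b => hsym.apply b a
  have hinv : (g⁻¹).IsSymm := by
    unfold Matrix.IsSymm
    rw [Matrix.transpose_nonsing_inv, hsym.eq]
  have hgis : ∀ a b, g⁻¹ a b = g⁻¹ b a := fun a b => hinv.apply b a
  have hg1 : ∀ a b, (∑ k, g a k * g⁻¹ k b) = kd a b := by
    intro a b
    have h2 := congrFun (congrFun (Matrix.mul_nonsing_inv g hdet) a) b
    simpa [Matrix.mul_apply, Matrix.one_apply, kd] using h2
  have hg2 : ∀ a b, (∑ k, g⁻¹ a k * g k b) = kd a b := by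
    intro a b
    have h2 := congrFun (congrFun (Matrix.nonsing_inv_mul g hdet) a) b
    simpa [Matrix.mul_apply, Matrix.one_apply, kd] using h2
  have hkds : ∀ a b, kd a b = kd b a := by intro a b; simp [kd, eq_comm]
  have hK1 : ∀ (v : Fin 4 → ℝ) (a : Fin 4), (∑ ρ, v ρ * kd a ρ) = v a := by
    intro v a; simp [kd]
  have hK2 : ∀ (v : Fin 4 → ℝ) (a : Fin 4), (∑ ρ, kd a ρ * v ρ) = v a := by
    intro v a; simp [kd]
  have hK3 : ∀ (v : Fin 4 → ℝ) (a : Fin 4), (∑ ρ, v ρ * kd ρ a) = v a := by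
    intro v a; simp [kd]
  have hK4 : ∀ (v : Fin 4 → ℝ) (a : Fin 4), (∑ ρ, kd ρ a * v ρ) = v a := by
    intro v a; simp [kd]
  have hkd4 : (∑ ρ : Fin 4, kd ρ ρ) = 4 := by simp [kd]
  have CG : ∀ (F G : Fin 4 → ℝ), (∀ x, F x = G x) → (∑ x, F x) = ∑ x, G x :=
    fun F G h => Finset.sum_congr rfl fun x _ => h x
  have R1 : ∀ (F : Fin 4 → Fin 4 → ℝ) (w : Fin 4 → ℝ),
      (∑ ρ, (∑ κ, F ρ κ) * w ρ) = ∑ κ, ∑ ρ, F ρ κ * w ρ := by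
    intro F w; simp only [Finset.sum_mul]; exact Finset.sum_comm
  have CI1 : ∀ (u : Fin 4 → ℝ) (a : Fin 4), (∑ κ, u κ * (∑ ρ, g a ρ * g⁻¹ ρ κ)) = u a := by
    intro u a; simp only [hg1]; exact hK1 u a
  have CE1 : ∀ (u : Fin 4 → ℝ) (b : Fin 4), (∑ ρ, (∑ κ, u κ * g⁻¹ ρ κ) * g b ρ) = u b := by
    intro u b
    calc (∑ ρ, (∑ κ, u κ * g⁻¹ ρ κ) * g b ρ)
        = ∑ κ, ∑ ρ, u κ * g⁻¹ ρ κ * g b ρ := R1 _ _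
      _ = ∑ κ, u κ * (∑ ρ, g b ρ * g⁻¹ ρ κ) := CG _ _ fun κ => by
            rw [Finset.mul_sum]; exact CG _ _ fun ρ => by ring
      _ = u b := CI1 u b
  -- J in terms of g⁻¹
  have hJc : ∀ m a b, J m a b
      = c * ((∑ ρ, f a ρ m * g⁻¹ b ρ) + (∑ ρ, f b ρ m * g⁻¹ a ρ)
        - (∑ ρ, f ρ ρ m) * g⁻¹ a b
        - (1 / 2) * (kd a m * (∑ ρ, ∑ σ, f b ρ σ * g⁻¹ ρ σ)
                   + kd b m * (∑ ρ, ∑ σ, f a ρ σ * g⁻¹ ρ σ))) := by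
    intro m a b
    rw [hJ]
    simp only [hπ, Fin.sum_univ_four]
    ring
  -- Term 1/2 : ∑ρ J a ρ m * g b ρ
  have HT1 : ∀ a b m, (∑ ρ, J a ρ m * g b ρ)
      = c * ((∑ κ, ∑ ρ, g⁻¹ m κ * (g b ρ * f ρ κ a))
           + f m b a
           - (∑ κ, f κ κ a) * kd b m
           - (1 / 2) * (∑ κ, ∑ σ, f m κ σ * g⁻¹ κ σ) * g b a
           - (1 / 2) * kd m a * (∑ ρ, g b ρ * (∑ κ, ∑ σ, f ρ κ σ * g⁻¹ κ σ))) := by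
    intro a b m
    have e1 : (∑ ρ, (∑ κ, f ρ κ a * g⁻¹ m κ) * g b ρ)
        = ∑ κ, ∑ ρ, g⁻¹ m κ * (g b ρ * f ρ κ a) := by
      calc (∑ ρ, (∑ κ, f ρ κ a * g⁻¹ m κ) * g b ρ)
          = ∑ κ, ∑ ρ, f ρ κ a * g⁻¹ m κ * g b ρ := R1 _ _
        _ = ∑ κ, ∑ ρ, g⁻¹ m κ * (g b ρ * f ρ κ a) := CG _ _ fun κ => CG _ _ fun ρ => by ring
    have e2 : (∑ ρ, (∑ κ, f m κ a * g⁻¹ ρ κ) * g b ρ) = f m b a := CE1 _ b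
    calc (∑ ρ, J a ρ m * g b ρ)
        = ∑ ρ, c * ((∑ κ, f ρ κ a * g⁻¹ m κ) * g b ρ
              + (∑ κ, f m κ a * g⁻¹ ρ κ) * g b ρ
              - (∑ κ, f κ κ a) * (g b ρ * g⁻¹ ρ m)
              - ((1 / 2) * (∑ κ, ∑ σ, f m κ σ * g⁻¹ κ σ)) * (kd ρ a * g b ρ)
              - ((1 / 2) * kd m a) * (g b ρ * (∑ κ, ∑ σ, f ρ κ σ * g⁻¹ κ σ))) :=
          CG _ _ fun ρ => by rw [hJc a ρ m]; ring
      _ = c * ((∑ ρ, (∑ κ, f ρ κ a * g⁻¹ m κ) * g b ρ)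
             + (∑ ρ, (∑ κ, f m κ a * g⁻¹ ρ κ) * g b ρ)
             - (∑ κ, f κ κ a) * (∑ ρ, g b ρ * g⁻¹ ρ m)
             - ((1 / 2) * (∑ κ, ∑ σ, f m κ σ * g⁻¹ κ σ)) * (∑ ρ, kd ρ a * g b ρ)
             - ((1 / 2) * kd m a) * (∑ ρ, g b ρ * (∑ κ, ∑ σ, f ρ κ σ * g⁻¹ κ σ))) := by
          simp only [Finset.sum_add_distrib, Finset.sum_sub_distrib, ← Finset.mul_sum]
      _ = _ := by
          rw [e1, e2, hg1 b m, hK4 (fun ρ => g b ρ) a]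
  -- trace : ∑ρ J ρ ρ b
  have hTr : ∀ b, (∑ ρ, J ρ ρ b)
      = c * (-(3 / 2) * (∑ κ, ∑ σ, f b κ σ * g⁻¹ κ σ)) := by
    intro b
    have p1 : (∑ ρ, (∑ κ, f ρ κ ρ * g⁻¹ b κ)) = ∑ κ, g⁻¹ b κ * (∑ ρ, f ρ ρ κ) := by
      calc (∑ ρ, (∑ κ, f ρ κ ρ * g⁻¹ b κ)) = ∑ κ, ∑ ρ, f ρ κ ρ * g⁻¹ b κ := Finset.sum_comm
        _ = ∑ κ, g⁻¹ b κ * (∑ ρ, f ρ ρ κ) := CG _ _ fun κ => by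
              rw [Finset.mul_sum]; exact CG _ _ fun ρ => by rw [hf ρ κ ρ]; ring
    have p2 : (∑ ρ, (∑ κ, f b κ ρ * g⁻¹ ρ κ)) = ∑ κ, ∑ σ, f b κ σ * g⁻¹ κ σ := by
      calc (∑ ρ, (∑ κ, f b κ ρ * g⁻¹ ρ κ)) = ∑ κ, ∑ ρ, f b κ ρ * g⁻¹ ρ κ := Finset.sum_comm
        _ = ∑ κ, ∑ σ, f b κ σ * g⁻¹ κ σ := CG _ _ fun κ => CG _ _ fun ρ => by rw [hgis ρ κ]
    have p3 : (∑ ρ, (∑ κ, f κ κ ρ) * g⁻¹ ρ b) = ∑ κ, g⁻¹ b κ * (∑ ρ, f ρ ρ κ) :=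
      CG _ _ fun ρ => by rw [hgis ρ b]; ring
    calc (∑ ρ, J ρ ρ b)
        = ∑ ρ, c * ((∑ κ, f ρ κ ρ * g⁻¹ b κ)
              + (∑ κ, f b κ ρ * g⁻¹ ρ κ)
              - (∑ κ, f κ κ ρ) * g⁻¹ ρ b
              - ((1 / 2) * (∑ κ, ∑ σ, f b κ σ * g⁻¹ κ σ)) * kd ρ ρ
              - (1 / 2) * (kd b ρ * (∑ κ, ∑ σ, f ρ κ σ * g⁻¹ κ σ))) :=
          CG _ _ fun ρ => by rw [hJc ρ ρ b]; ring
      _ = c * ((∑ ρ, (∑ κ, f ρ κ ρ * g⁻¹ b κ))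
             + (∑ ρ, (∑ κ, f b κ ρ * g⁻¹ ρ κ))
             - (∑ ρ, (∑ κ, f κ κ ρ) * g⁻¹ ρ b)
             - ((1 / 2) * (∑ κ, ∑ σ, f b κ σ * g⁻¹ κ σ)) * (∑ ρ, kd ρ ρ)
             - (1 / 2) * (∑ ρ, kd b ρ * (∑ κ, ∑ σ, f ρ κ σ * g⁻¹ κ σ))) := by
          simp only [Finset.sum_add_distrib, Finset.sum_sub_distrib, ← Finset.mul_sum]
      _ = _ := by
          rw [p1, p2, p3, hkd4,
            hK2 (fun ρ => (∑ κ, ∑ σ, f ρ κ σ * g⁻¹ κ σ)) b]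
          ring
  -- Term 5 : ∑ρσ J ρ ρ σ * g b σ
  have hT5 : ∀ b, (∑ ρ, ∑ σ, J ρ ρ σ * g b σ)
      = c * (-(3 / 2) * (∑ ρ, g b ρ * (∑ κ, ∑ σ, f ρ κ σ * g⁻¹ κ σ))) := by
    intro b
    calc (∑ ρ, ∑ σ, J ρ ρ σ * g b σ)
        = ∑ σ, ∑ ρ, J ρ ρ σ * g b σ := Finset.sum_comm
      _ = ∑ σ, (c * (-(3 / 2))) * (g b σ * (∑ κ, ∑ τ, f σ κ τ * g⁻¹ κ τ)) := CG _ _ fun σ => by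
            rw [← Finset.sum_mul, hTr σ]; ring
      _ = _ := by rw [← Finset.mul_sum]; ring
  -- Term 6 : ∑ρσ J a ρ σ * g ρ σ
  have hT6 : ∀ a, (∑ ρ, ∑ σ, J a ρ σ * g ρ σ)
      = c * (-2 * (∑ κ, f κ κ a)
           - (∑ ρ, g a ρ * (∑ κ, ∑ σ, f ρ κ σ * g⁻¹ κ σ))) := by
    intro a
    have i2 : ∀ ρ, (∑ σ, (∑ κ, f σ κ a * g⁻¹ ρ κ) * g ρ σ)
        = ∑ κ, g⁻¹ ρ κ * (∑ σ, g ρ σ * f σ κ a) := by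
      intro ρ
      calc (∑ σ, (∑ κ, f σ κ a * g⁻¹ ρ κ) * g ρ σ)
          = ∑ κ, ∑ σ, f σ κ a * g⁻¹ ρ κ * g ρ σ := R1 _ _
        _ = ∑ κ, g⁻¹ ρ κ * (∑ σ, g ρ σ * f σ κ a) := CG _ _ fun κ => by
              rw [Finset.mul_sum]; exact CG _ _ fun σ => by ring
    have i3 : ∀ ρ, (∑ σ, g⁻¹ ρ σ * g ρ σ) = kd ρ ρ := by
      intro ρ
      calc (∑ σ, g⁻¹ ρ σ * g ρ σ) = ∑ σ, g⁻¹ ρ σ * g σ ρ := CG _ _ fun σ => by rw [hgs ρ σ]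
        _ = kd ρ ρ := hg2 ρ ρ
    have hPhi : ∀ κ, (∑ ρ, g⁻¹ ρ κ * (∑ σ, g ρ σ * f σ κ a)) = f κ κ a := by
      intro κ
      calc (∑ ρ, g⁻¹ ρ κ * (∑ σ, g ρ σ * f σ κ a))
          = ∑ ρ, ∑ σ, f σ κ a * (g⁻¹ κ ρ * g ρ σ) := CG _ _ fun ρ => by
            rw [Finset.mul_sum]; exact CG _ _ fun σ => by rw [hgis ρ κ]; ring
        _ = ∑ σ, ∑ ρ, f σ κ a * (g⁻¹ κ ρ * g ρ σ) := Finset.sum_comm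
        _ = ∑ σ, f σ κ a * (∑ ρ, g⁻¹ κ ρ * g ρ σ) := CG _ _ fun σ => (Finset.mul_sum _ _ _).symm
        _ = ∑ σ, f σ κ a * kd κ σ := CG _ _ fun σ => by rw [hg2 κ σ]
        _ = f κ κ a := hK1 _ κ
    have hInner : ∀ ρ, (∑ σ, J a ρ σ * g ρ σ)
        = c * (f ρ ρ a
             + (∑ κ, g⁻¹ ρ κ * (∑ σ, g ρ σ * f σ κ a))
             - (∑ κ, f κ κ a) * kd ρ ρ
             - (1 / 2) * (kd ρ a * (∑ σ, g ρ σ * (∑ κ, ∑ τ, f σ κ τ * g⁻¹ κ τ)))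
             - (1 / 2) * ((∑ κ, ∑ τ, f ρ κ τ * g⁻¹ κ τ) * g ρ a)) := by
      intro ρ
      calc (∑ σ, J a ρ σ * g ρ σ)
          = ∑ σ, c * ((∑ κ, f ρ κ a * g⁻¹ σ κ) * g ρ σ
                + (∑ κ, f σ κ a * g⁻¹ ρ κ) * g ρ σ
                - (∑ κ, f κ κ a) * (g⁻¹ ρ σ * g ρ σ)
                - ((1 / 2) * kd ρ a) * (g ρ σ * (∑ κ, ∑ τ, f σ κ τ * g⁻¹ κ τ))
                - ((1 / 2) * (∑ κ, ∑ τ, f ρ κ τ * g⁻¹ κ τ)) * (kd σ a * g ρ σ)) :=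
            CG _ _ fun σ => by rw [hJc a ρ σ]; ring
        _ = c * ((∑ σ, (∑ κ, f ρ κ a * g⁻¹ σ κ) * g ρ σ)
               + (∑ σ, (∑ κ, f σ κ a * g⁻¹ ρ κ) * g ρ σ)
               - (∑ κ, f κ κ a) * (∑ σ, g⁻¹ ρ σ * g ρ σ)
               - ((1 / 2) * kd ρ a) * (∑ σ, g ρ σ * (∑ κ, ∑ τ, f σ κ τ * g⁻¹ κ τ))
               - ((1 / 2) * (∑ κ, ∑ τ, f ρ κ τ * g⁻¹ κ τ)) * (∑ σ, kd σ a * g ρ σ)) := by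
            simp only [Finset.sum_add_distrib, Finset.sum_sub_distrib, ← Finset.mul_sum]
        _ = _ := by
            rw [CE1 (fun κ => f ρ κ a) ρ, i2 ρ, i3 ρ, hK4 (fun σ => g ρ σ) a]; ring
    calc (∑ ρ, ∑ σ, J a ρ σ * g ρ σ)
        = ∑ ρ, c * (f ρ ρ a
             + (∑ κ, g⁻¹ ρ κ * (∑ σ, g ρ σ * f σ κ a))
             - (∑ κ, f κ κ a) * kd ρ ρ
             - ((1 / 2)) * (kd ρ a * (∑ σ, g ρ σ * (∑ κ, ∑ τ, f σ κ τ * g⁻¹ κ τ)))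
             - ((1 / 2)) * ((∑ κ, ∑ τ, f ρ κ τ * g⁻¹ κ τ) * g ρ a)) :=
          CG _ _ fun ρ => hInner ρ
      _ = c * ((∑ ρ, f ρ ρ a)
             + (∑ ρ, ∑ κ, g⁻¹ ρ κ * (∑ σ, g ρ σ * f σ κ a))
             - (∑ κ, f κ κ a) * (∑ ρ, kd ρ ρ)
             - (1 / 2) * (∑ ρ, kd ρ a * (∑ σ, g ρ σ * (∑ κ, ∑ τ, f σ κ τ * g⁻¹ κ τ)))
             - (1 / 2) * (∑ ρ, (∑ κ, ∑ τ, f ρ κ τ * g⁻¹ κ τ) * g ρ a)) := by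
          simp only [Finset.sum_add_distrib, Finset.sum_sub_distrib, ← Finset.mul_sum]
      _ = _ := by
          rw [show (∑ ρ, ∑ κ, g⁻¹ ρ κ * (∑ σ, g ρ σ * f σ κ a)) = ∑ κ, f κ κ a from by
                rw [Finset.sum_comm]; exact CG _ _ fun κ => hPhi κ,
              hkd4,
              hK4 (fun ρ => (∑ σ, g ρ σ * (∑ κ, ∑ τ, f σ κ τ * g⁻¹ κ τ))) a,
              show (∑ ρ, (∑ κ, ∑ τ, f ρ κ τ * g⁻¹ κ τ) * g ρ a)
                  = ∑ ρ, g a ρ * (∑ κ, ∑ σ, f ρ κ σ * g⁻¹ κ σ) from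
                CG _ _ fun ρ => by rw [hgs ρ a]; ring]
          ring
  -- Term 4 inner double contraction with g μ σ * g ν τ
  have hD : ∀ ρ, (∑ σ, ∑ τ, J ρ σ τ * (g μ σ * g ν τ))
      = c * ((∑ σ, g μ σ * f σ ν ρ) + (∑ τ, g ν τ * f τ μ ρ)
           - (∑ κ, f κ κ ρ) * g μ ν
           - (1 / 2) * (g μ ρ * (∑ τ, g ν τ * (∑ κ, ∑ σ, f τ κ σ * g⁻¹ κ σ)))
           - (1 / 2) * (g ν ρ * (∑ σ, g μ σ * (∑ κ, ∑ τ, f σ κ τ * g⁻¹ κ τ)))) := by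
    intro ρ
    have d1 : (∑ σ, ∑ τ, (∑ κ, f σ κ ρ * g⁻¹ τ κ) * (g μ σ * g ν τ))
        = ∑ σ, g μ σ * f σ ν ρ := by
      refine CG _ _ fun σ => ?_
      calc (∑ τ, (∑ κ, f σ κ ρ * g⁻¹ τ κ) * (g μ σ * g ν τ))
          = ∑ τ, g μ σ * ((∑ κ, f σ κ ρ * g⁻¹ τ κ) * g ν τ) := CG _ _ fun τ => by ring
        _ = g μ σ * (∑ τ, (∑ κ, f σ κ ρ * g⁻¹ τ κ) * g ν τ) := (Finset.mul_sum _ _ _).symm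
        _ = g μ σ * f σ ν ρ := by rw [CE1 (fun κ => f σ κ ρ) ν]
    have d2 : (∑ σ, ∑ τ, (∑ κ, f τ κ ρ * g⁻¹ σ κ) * (g μ σ * g ν τ))
        = ∑ τ, g ν τ * f τ μ ρ := by
      calc (∑ σ, ∑ τ, (∑ κ, f τ κ ρ * g⁻¹ σ κ) * (g μ σ * g ν τ))
          = ∑ τ, ∑ σ, (∑ κ, f τ κ ρ * g⁻¹ σ κ) * (g μ σ * g ν τ) := Finset.sum_comm
        _ = ∑ τ, g ν τ * f τ μ ρ := by
            refine CG _ _ fun τ => ?_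
            calc (∑ σ, (∑ κ, f τ κ ρ * g⁻¹ σ κ) * (g μ σ * g ν τ))
                = ∑ σ, g ν τ * ((∑ κ, f τ κ ρ * g⁻¹ σ κ) * g μ σ) := CG _ _ fun σ => by ring
              _ = g ν τ * (∑ σ, (∑ κ, f τ κ ρ * g⁻¹ σ κ) * g μ σ) := (Finset.mul_sum _ _ _).symm
              _ = g ν τ * f τ μ ρ := by rw [CE1 (fun κ => f τ κ ρ) μ]
    have d3 : (∑ σ, ∑ τ, g⁻¹ σ τ * (g μ σ * g ν τ)) = g μ ν := by
      calc (∑ σ, ∑ τ, g⁻¹ σ τ * (g μ σ * g ν τ))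
          = ∑ σ, g μ σ * (∑ τ, g⁻¹ σ τ * g τ ν) := CG _ _ fun σ => by
            rw [Finset.mul_sum]; exact CG _ _ fun τ => by rw [hgs ν τ]; ring
        _ = ∑ σ, g μ σ * kd σ ν := CG _ _ fun σ => by rw [hg2 σ ν]
        _ = g μ ν := hK3 _ ν
    have d4 : (∑ σ, ∑ τ, kd σ ρ * ((∑ κ, ∑ ι, f τ κ ι * g⁻¹ κ ι) * (g μ σ * g ν τ)))
        = g μ ρ * (∑ τ, g ν τ * (∑ κ, ∑ σ, f τ κ σ * g⁻¹ κ σ)) := by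
      calc (∑ σ, ∑ τ, kd σ ρ * ((∑ κ, ∑ ι, f τ κ ι * g⁻¹ κ ι) * (g μ σ * g ν τ)))
          = ∑ σ, kd σ ρ * (g μ σ * (∑ τ, g ν τ * (∑ κ, ∑ ι, f τ κ ι * g⁻¹ κ ι))) :=
            CG _ _ fun σ => by
              rw [Finset.mul_sum, Finset.mul_sum]
              exact CG _ _ fun τ => by ring
        _ = g μ ρ * (∑ τ, g ν τ * (∑ κ, ∑ σ, f τ κ σ * g⁻¹ κ σ)) :=
            hK4 (fun σ => g μ σ * (∑ τ, g ν τ * (∑ κ, ∑ ι, f τ κ ι * g⁻¹ κ ι))) ρ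
    have d5 : (∑ σ, ∑ τ, kd τ ρ * ((∑ κ, ∑ ι, f σ κ ι * g⁻¹ κ ι) * (g μ σ * g ν τ)))
        = g ν ρ * (∑ σ, g μ σ * (∑ κ, ∑ τ, f σ κ τ * g⁻¹ κ τ)) := by
      calc (∑ σ, ∑ τ, kd τ ρ * ((∑ κ, ∑ ι, f σ κ ι * g⁻¹ κ ι) * (g μ σ * g ν τ)))
          = ∑ τ, ∑ σ, kd τ ρ * ((∑ κ, ∑ ι, f σ κ ι * g⁻¹ κ ι) * (g μ σ * g ν τ)) :=
            Finset.sum_comm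
        _ = ∑ τ, kd τ ρ * (g ν τ * (∑ σ, g μ σ * (∑ κ, ∑ ι, f σ κ ι * g⁻¹ κ ι))) :=
            CG _ _ fun τ => by
              rw [Finset.mul_sum, Finset.mul_sum]
              exact CG _ _ fun σ => by ring
        _ = g ν ρ * (∑ σ, g μ σ * (∑ κ, ∑ τ, f σ κ τ * g⁻¹ κ τ)) :=
            hK4 (fun τ => g ν τ * (∑ σ, g μ σ * (∑ κ, ∑ ι, f σ κ ι * g⁻¹ κ ι))) ρ
    calc (∑ σ, ∑ τ, J ρ σ τ * (g μ σ * g ν τ))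
        = ∑ σ, ∑ τ, c * ((∑ κ, f σ κ ρ * g⁻¹ τ κ) * (g μ σ * g ν τ)
              + (∑ κ, f τ κ ρ * g⁻¹ σ κ) * (g μ σ * g ν τ)
              - (∑ κ, f κ κ ρ) * (g⁻¹ σ τ * (g μ σ * g ν τ))
              - (1 / 2) * (kd σ ρ * ((∑ κ, ∑ ι, f τ κ ι * g⁻¹ κ ι) * (g μ σ * g ν τ)))
              - (1 / 2) * (kd τ ρ * ((∑ κ, ∑ ι, f σ κ ι * g⁻¹ κ ι) * (g μ σ * g ν τ)))) :=
          CG _ _ fun σ => CG _ _ fun τ => by rw [hJc ρ σ τ]; ring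
      _ = c * ((∑ σ, ∑ τ, (∑ κ, f σ κ ρ * g⁻¹ τ κ) * (g μ σ * g ν τ))
             + (∑ σ, ∑ τ, (∑ κ, f τ κ ρ * g⁻¹ σ κ) * (g μ σ * g ν τ))
             - (∑ κ, f κ κ ρ) * (∑ σ, ∑ τ, g⁻¹ σ τ * (g μ σ * g ν τ))
             - (1 / 2) * (∑ σ, ∑ τ, kd σ ρ * ((∑ κ, ∑ ι, f τ κ ι * g⁻¹ κ ι) * (g μ σ * g ν τ)))
             - (1 / 2) * (∑ σ, ∑ τ, kd τ ρ * ((∑ κ, ∑ ι, f σ κ ι * g⁻¹ κ ι) * (g μ σ * g ν τ)))) := by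
          simp only [Finset.sum_add_distrib, Finset.sum_sub_distrib, ← Finset.mul_sum]
      _ = _ := by rw [d1, d2, d3, d4, d5]
  -- Term 4
  have T4 : (∑ ρ, ∑ σ, ∑ τ, J ρ σ τ * g⁻¹ ρ l *
        (g μ σ * g ν τ - (1 / 2) * g σ τ * g μ ν))
      = c * ((∑ κ, ∑ ρ, g⁻¹ l κ * (g μ ρ * f ρ κ ν))
           + (∑ κ, ∑ ρ, g⁻¹ l κ * (g ν ρ * f ρ κ μ))
           - (1 / 2) * kd μ l * (∑ ρ, g ν ρ * (∑ κ, ∑ σ, f ρ κ σ * g⁻¹ κ σ))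
           - (1 / 2) * kd ν l * (∑ ρ, g μ ρ * (∑ κ, ∑ σ, f ρ κ σ * g⁻¹ κ σ))
           + (1 / 2) * (g μ ν * (∑ κ, ∑ σ, f l κ σ * g⁻¹ κ σ))) := by
    have u1 : (∑ ρ, g⁻¹ ρ l * (∑ σ, g μ σ * f σ ν ρ))
        = ∑ κ, ∑ ρ, g⁻¹ l κ * (g μ ρ * f ρ κ ν) :=
      CG _ _ fun ρ => by
        rw [Finset.mul_sum]; exact CG _ _ fun σ => by rw [hgis ρ l, hf σ ν ρ]
    have u2 : (∑ ρ, g⁻¹ ρ l * (∑ τ, g ν τ * f τ μ ρ))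
        = ∑ κ, ∑ ρ, g⁻¹ l κ * (g ν ρ * f ρ κ μ) :=
      CG _ _ fun ρ => by
        rw [Finset.mul_sum]; exact CG _ _ fun τ => by rw [hgis ρ l, hf τ μ ρ]
    have u4 : (∑ ρ, g μ ρ * g⁻¹ ρ l) = kd μ l := hg1 μ l
    have u5 : (∑ ρ, g ν ρ * g⁻¹ ρ l) = kd ν l := hg1 ν l
    have u6 : (∑ ρ, g⁻¹ ρ l * (∑ σ, g ρ σ * (∑ κ, ∑ τ, f σ κ τ * g⁻¹ κ τ)))
        = ∑ κ, ∑ σ, f l κ σ * g⁻¹ κ σ := by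
      calc (∑ ρ, g⁻¹ ρ l * (∑ σ, g ρ σ * (∑ κ, ∑ τ, f σ κ τ * g⁻¹ κ τ)))
          = ∑ ρ, ∑ σ, (g⁻¹ l ρ * g ρ σ) * (∑ κ, ∑ τ, f σ κ τ * g⁻¹ κ τ) :=
            CG _ _ fun ρ => by
              rw [Finset.mul_sum]; exact CG _ _ fun σ => by rw [hgis ρ l]; ring
        _ = ∑ σ, ∑ ρ, (g⁻¹ l ρ * g ρ σ) * (∑ κ, ∑ τ, f σ κ τ * g⁻¹ κ τ) := Finset.sum_comm
        _ = ∑ σ, (∑ ρ, g⁻¹ l ρ * g ρ σ) * (∑ κ, ∑ τ, f σ κ τ * g⁻¹ κ τ) :=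
            CG _ _ fun σ => (Finset.sum_mul _ _ _).symm
        _ = ∑ σ, kd l σ * (∑ κ, ∑ τ, f σ κ τ * g⁻¹ κ τ) := CG _ _ fun σ => by rw [hg2 l σ]
        _ = ∑ κ, ∑ σ, f l κ σ * g⁻¹ κ σ := hK2 _ l
    calc (∑ ρ, ∑ σ, ∑ τ, J ρ σ τ * g⁻¹ ρ l * (g μ σ * g ν τ - (1 / 2) * g σ τ * g μ ν))
        = ∑ ρ, (g⁻¹ ρ l * (∑ σ, ∑ τ, J ρ σ τ * (g μ σ * g ν τ))
              - (g⁻¹ ρ l * ((1 / 2) * g μ ν)) * (∑ σ, ∑ τ, J ρ σ τ * g σ τ)) := by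
          refine CG _ _ fun ρ => ?_
          calc (∑ σ, ∑ τ, J ρ σ τ * g⁻¹ ρ l * (g μ σ * g ν τ - (1 / 2) * g σ τ * g μ ν))
              = ∑ σ, ∑ τ, (g⁻¹ ρ l * (J ρ σ τ * (g μ σ * g ν τ))
                  - (g⁻¹ ρ l * ((1 / 2) * g μ ν)) * (J ρ σ τ * g σ τ)) :=
                CG _ _ fun σ => CG _ _ fun τ => by ring
            _ = _ := by
                simp only [Finset.sum_sub_distrib, ← Finset.mul_sum]
      _ = ∑ ρ, c * (g⁻¹ ρ l * (∑ σ, g μ σ * f σ ν ρ)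
              + g⁻¹ ρ l * (∑ τ, g ν τ * f τ μ ρ)
              - ((1 / 2) * (∑ τ, g ν τ * (∑ κ, ∑ σ, f τ κ σ * g⁻¹ κ σ))) * (g μ ρ * g⁻¹ ρ l)
              - ((1 / 2) * (∑ σ, g μ σ * (∑ κ, ∑ τ, f σ κ τ * g⁻¹ κ τ))) * (g ν ρ * g⁻¹ ρ l)
              + ((1 / 2) * g μ ν) * (g⁻¹ ρ l * (∑ σ, g ρ σ * (∑ κ, ∑ τ, f σ κ τ * g⁻¹ κ τ)))) :=
          CG _ _ fun ρ => by rw [hD ρ, hT6 ρ]; ring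
      _ = c * ((∑ ρ, g⁻¹ ρ l * (∑ σ, g μ σ * f σ ν ρ))
             + (∑ ρ, g⁻¹ ρ l * (∑ τ, g ν τ * f τ μ ρ))
             - ((1 / 2) * (∑ τ, g ν τ * (∑ κ, ∑ σ, f τ κ σ * g⁻¹ κ σ))) * (∑ ρ, g μ ρ * g⁻¹ ρ l)
             - ((1 / 2) * (∑ σ, g μ σ * (∑ κ, ∑ τ, f σ κ τ * g⁻¹ κ τ))) * (∑ ρ, g ν ρ * g⁻¹ ρ l)
             + ((1 / 2) * g μ ν) * (∑ ρ, g⁻¹ ρ l * (∑ σ, g ρ σ * (∑ κ, ∑ τ, f σ κ τ * g⁻¹ κ τ)))) := by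
          simp only [Finset.sum_add_distrib, Finset.sum_sub_distrib, ← Finset.mul_sum]
      _ = _ := by rw [u1, u2, u4, u5, u6]; ring
  -- final assembly
  rw [hf' l μ ν, HT1 μ ν l, HT1 ν μ l, hTr l, T4, hT5 ν, hT5 μ, hT6 ν, hT6 μ,
    hf l ν μ, hkds ν l, hkds μ l, hgs ν μ]
  field_simp
  ring
end
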